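/- arXiv:1212.4596 — 4 statements merged into one kernel-verified Lean document; each statement's English description precedes it below -/
import Mathlib

section
/- The strong homotopy Lie 2-bracket D₂ satisfies the strong homotopy Jacobi equation in dimension two: for all homogeneous Hamiltonian forms f₁, f₂ on an n-plectic manifold, D₁D₂(f₁,f₂) + D₂(D₁f₁, f₂) + (-1)^{deg f₁ · deg f₂} D₂(D₁f₂, f₁) = 0, where D₁ f = -df. -/
/-- A differential form `f` is Hamiltonian if it satisfies both fundamental pairings. -/
def IsHamiltonian {Ω MV : Type} [AddCommGroup Ω] [Module ℝ Ω]
    [AddCommGroup MV] [Module ℝ MV]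
    (ι : MV →ₗ[ℝ] Ω →ₗ[ℝ] Ω) (d : Ω →ₗ[ℝ] Ω) (ω : Ω) (f : Ω) : Prop :=
  (∃ X : MV, ι X ω = -(d f)) ∧ (∃ Y : MV, ι Y ω = -f)

/-- The Lie derivative of a form along a multivector field of tensor degree k:
L_X α = d(i_X α) - (-1)^k i_X dα. -/
noncomputable def LieD {Ω MV : Type} [AddCommGroup Ω] [Module ℝ Ω]
    [AddCommGroup MV] [Module ℝ MV]
    (ι : MV →ₗ[ℝ] Ω →ₗ[ℝ] Ω) (d : Ω →ₗ[ℝ] Ω) (k : ℤ) (X : MV) (α : Ω) : Ω :=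
  d (ι X α) - ((Int.negOnePow k : ℤ)) • ι X (d α)

/-- The strong homotopy Lie 2-bracket
D₂(f₁,f₂) = e(f₁) L_{X₁} f₂ + e(f₁,f₂) e(f₂) L_{X₂} f₁,
where f₁, f₂ are homogeneous Hamiltonian forms of symmetric degree d₁, d₂,
X₁, X₂ are associated semi-Hamiltonian multivector fields (of tensor degree
d₁, d₂), and e(f) = (-1)^{deg f}, e(f,g) = (-1)^{deg f · deg g}. -/
noncomputable def D2 {Ω MV : Type} [AddCommGroup Ω] [Module ℝ Ω]
    [AddCommGroup MV] [Module ℝ MV]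
    (ι : MV →ₗ[ℝ] Ω →ₗ[ℝ] Ω) (d : Ω →ₗ[ℝ] Ω)
    (d₁ d₂ : ℤ) (X₁ X₂ : MV) (f₁ f₂ : Ω) : Ω :=
  ((Int.negOnePow d₁ : ℤ)) • LieD ι d d₁ X₁ f₂
    + ((Int.negOnePow (d₁ * d₂) : ℤ) * (Int.negOnePow d₂ : ℤ)) • LieD ι d d₂ X₂ f₁

/-- the strong homotopy Jacobi equation in dimension two:
D₁D₂(f₁,f₂) + D₂(D₁f₁,f₂) + (-1)^{deg f₁ deg f₂} D₂(D₁f₂,f₁) = 0, where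
D₁ f = -df (so D₁ f_i has symmetric degree d_i - 1, with semi-Hamiltonian
multivector field X_i' and the associated field of f_j can still be used). -/
theorem D2_sh_jacobi_dim_two
    (Ω MV : Type) [AddCommGroup Ω] [Module ℝ Ω] [AddCommGroup MV] [Module ℝ MV]
    (ι : MV →ₗ[ℝ] Ω →ₗ[ℝ] Ω) (d : Ω →ₗ[ℝ] Ω)
    (ω : Ω) (hdω : d ω = 0)
    -- d is a differential
    (hdd : ∀ α : Ω, d (d α) = 0)
    -- homogeneous Hamiltonian forms of symmetric degrees d₁, d₂ with associated
    -- semi-Hamiltonian multivector fields X₁, X₂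
    (f₁ f₂ : Ω) (d₁ d₂ : ℤ) (X₁ X₂ : MV)
    (hX₁ : ι X₁ ω = -(d f₁)) (hX₂ : ι X₂ ω = -(d f₂))
    -- kernel property of the Hamiltonian forms f₁, f₂
    (hker : ∀ ξ : MV, ι ξ ω = 0 →
      ι ξ f₁ = 0 ∧ ι ξ f₂ = 0 ∧ ι ξ (d f₁) = 0 ∧ ι ξ (d f₂) = 0)
    -- semi-Hamiltonian multivector fields associated to D₁f₁ = -df₁ and D₁f₂ = -df₂
    (X₁' X₂' : MV)
    (hX₁' : ι X₁' ω = -(d (-(d f₁)))) (hX₂' : ι X₂' ω = -(d (-(d f₂)))) :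
    -(d (D2 ι d d₁ d₂ X₁ X₂ f₁ f₂))
      + D2 ι d (d₁ - 1) d₂ X₁' X₂ (-(d f₁)) f₂
      + ((Int.negOnePow (d₁ * d₂) : ℤ)) • D2 ι d (d₂ - 1) d₁ X₂' X₁ (-(d f₂)) f₁
      = 0 := by
  have h1 : ι X₁' ω = 0 := by rw [hX₁']; simp [hdd]
  have h2 : ι X₂' ω = 0 := by rw [hX₂']; simp [hdd]
  obtain ⟨-, hA, -, hB⟩ := hker X₁' h1
  obtain ⟨hC, -, hD, -⟩ := hker X₂' h2
  have sq : ∀ n : ℤ, (Int.negOnePow n : ℤ) * (Int.negOnePow n : ℤ) = 1 := by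
    intro n
    rw [← Units.val_mul, Int.units_mul_self, Units.val_one]
  have key1 : ((Int.negOnePow ((d₁ - 1) * d₂) : ℤ) * (Int.negOnePow d₂ : ℤ))
      = (Int.negOnePow (d₁ * d₂) : ℤ) := by
    have : (d₁ - 1) * d₂ = d₁ * d₂ + (-1) * d₂ := by ring
    rw [this, Int.negOnePow_add, Units.val_mul, mul_assoc,
      show ((-1 : ℤ) * d₂) = -d₂ by ring, Int.negOnePow_neg, sq, mul_one]
  have key2 : ((Int.negOnePow (d₁ * d₂) : ℤ)) *
      ((Int.negOnePow ((d₂ - 1) * d₁) : ℤ) * (Int.negOnePow d₁ : ℤ)) = 1 := by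
    have : (d₂ - 1) * d₁ = d₁ * d₂ + (-1) * d₁ := by ring
    rw [this, Int.negOnePow_add, Units.val_mul, show ((-1 : ℤ) * d₁) = -d₁ by ring,
      Int.negOnePow_neg]
    rw [show (Int.negOnePow (d₁ * d₂) : ℤ) * ((Int.negOnePow (d₁ * d₂) : ℤ) *
      (Int.negOnePow d₁ : ℤ) * (Int.negOnePow d₁ : ℤ)) =
      ((Int.negOnePow (d₁ * d₂) : ℤ) * (Int.negOnePow (d₁ * d₂) : ℤ)) *
      ((Int.negOnePow d₁ : ℤ) * (Int.negOnePow d₁ : ℤ)) by ring, sq, sq, one_mul]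
  simp only [D2, LieD, map_neg, map_sub, map_add, map_zsmul, map_smul, hdd, hA, hB, hC,
    hD, map_zero, smul_zero, neg_zero, zero_sub, sub_zero, smul_neg, neg_neg,
    zero_smul, add_zero, zero_add, smul_smul, sq, one_smul, key1, key2]
  rw [mul_assoc, sq, mul_one]
  abel
end

section
/- The graded Jacobi expression of the 2-bracket D₂ on Hamiltonian forms equals a sum of Lie derivatives along the associated semi-Hamiltonian multivector fields: for homogeneous Hamiltonian forms f₁, f₂, f₃, ∑_{s∈Sh(2,1)} e(s; f₁,f₂,f₃) D₂(D₂(f_{s₁}, f_{s₂}), f_{s₃}) = -½ ∑_{s∈Sh(2,1)} e(s; f₁,f₂,f₃) e(f_{s₁}) e(f_{s₂}) L_{X_{D₂}(f_{s₁},f_{s₂})} f_{s₃}, where X_{D₂}(f,g) = -2 e(f)[X_g, X_f] with i_{X_f}ω = -df. -/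
/-- Sign (-1)^k. -/
noncomputable def sgn (k : ℤ) : ℤ := (Int.negOnePow k : ℤ)

/-- The semi-Hamiltonian multivector field associated to D₂(f,g):
X_{D₂}(f,g) = -2 e(f) [X_g, X_f], where k = deg f. -/
noncomputable def XD2 {MV : Type} [AddCommGroup MV] [Module ℝ MV]
    (br : MV → MV → MV) (k : ℤ) (Xf Xg : MV) : MV :=
  ((-2 : ℤ) * sgn k) • br Xg Xf

section helpers
variable {Ω MV : Type} [AddCommGroup Ω] [Module ℝ Ω] [AddCommGroup MV] [Module ℝ MV]
  (ι : MV →ₗ[ℝ] Ω →ₗ[ℝ] Ω) (d : Ω →ₗ[ℝ] Ω)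

lemma LieD_zsmul_X (k : ℤ) (c : ℤ) (X : MV) (α : Ω) :
    LieD ι d k (c • X) α = c • LieD ι d k X α := by
  rw [LieD, LieD, map_zsmul, LinearMap.smul_apply, map_zsmul, LinearMap.smul_apply,
    smul_sub, smul_comm]

lemma LieD_add_arg (k : ℤ) (X : MV) (α β : Ω) :
    LieD ι d k X (α + β) = LieD ι d k X α + LieD ι d k X β := by
  rw [LieD, LieD, LieD, map_add, map_add, map_add, map_add, smul_add]; abel

lemma LieD_zsmul_arg (k : ℤ) (c : ℤ) (X : MV) (α : Ω) :
    LieD ι d k X (c • α) = c • LieD ι d k X α := by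
  rw [LieD, LieD, map_zsmul, map_zsmul, map_zsmul, map_zsmul, smul_sub, smul_comm]

end helpers

set_option maxHeartbeats 2000000 in
/-- the graded Jacobi expression of D₂ equals
-½ ∑_{s∈Sh(2,1)} e(s) e(f_{s₁}) e(f_{s₂}) L_{X_{D₂}(f_{s₁},f_{s₂})} f_{s₃}.
The three (2,1)-shuffles of (1,2,3) are (1,2|3), (1,3|2), (2,3|1), with Koszul
signs 1, (-1)^{d₂d₃}, (-1)^{d₁d₂+d₁d₃} w.r.t. the symmetric degrees d_i. -/
theorem D2_jacobi_expression
    (Ω MV : Type) [AddCommGroup Ω] [Module ℝ Ω] [AddCommGroup MV] [Module ℝ MV]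
    (ι : MV →ₗ[ℝ] Ω →ₗ[ℝ] Ω) (d : Ω →ₗ[ℝ] Ω)
    (ω : Ω) (hdω : d ω = 0)
    (degm : MV → ℤ) (br : MV → MV → MV)
    -- calculus identity for the Schouten bracket
    (hbr : ∀ (X Y : MV) (α : Ω), ι (br X Y) α =
      ((Int.negOnePow ((degm X - 1) * degm Y) : ℤ)) • LieD ι d (degm X) X (ι Y α)
        - ι Y (LieD ι d (degm X) X α))
    -- L_{[X,Y]} α = (-1)^{(|X|-1)(|Y|-1)} L_X L_Y α - L_Y L_X α
    (hLbr : ∀ (X Y : MV) (α : Ω), LieD ι d (degm X + degm Y - 1) (br X Y) α =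
      ((Int.negOnePow ((degm X - 1) * (degm Y - 1)) : ℤ)) •
          LieD ι d (degm X) X (LieD ι d (degm Y) Y α)
        - LieD ι d (degm Y) Y (LieD ι d (degm X) X α))
    -- homogeneous Hamiltonian forms of symmetric degrees d₁, d₂, d₃ with
    -- associated semi-Hamiltonian multivector fields
    (f₁ f₂ f₃ : Ω) (d₁ d₂ d₃ : ℤ) (X₁ X₂ X₃ : MV)
    (hX₁ : ι X₁ ω = -(d f₁)) (hX₂ : ι X₂ ω = -(d f₂)) (hX₃ : ι X₃ ω = -(d f₃))
    (hdX₁ : degm X₁ = d₁) (hdX₂ : degm X₂ = d₂) (hdX₃ : degm X₃ = d₃) :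
    D2 ι d (d₁ + d₂ - 1) d₃ (XD2 br d₁ X₁ X₂) X₃ (D2 ι d d₁ d₂ X₁ X₂ f₁ f₂) f₃
      + (sgn (d₂ * d₃)) •
          D2 ι d (d₁ + d₃ - 1) d₂ (XD2 br d₁ X₁ X₃) X₂ (D2 ι d d₁ d₃ X₁ X₃ f₁ f₃) f₂
      + (sgn (d₁ * d₂ + d₁ * d₃)) •
          D2 ι d (d₂ + d₃ - 1) d₁ (XD2 br d₂ X₂ X₃) X₁ (D2 ι d d₂ d₃ X₂ X₃ f₂ f₃) f₁
    = -((2 : ℝ)⁻¹ •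
        ((sgn d₁ * sgn d₂) • LieD ι d (d₁ + d₂ - 1) (XD2 br d₁ X₁ X₂) f₃
          + (sgn (d₂ * d₃) * (sgn d₁ * sgn d₃)) •
              LieD ι d (d₁ + d₃ - 1) (XD2 br d₁ X₁ X₃) f₂
          + (sgn (d₁ * d₂ + d₁ * d₃) * (sgn d₂ * sgn d₃)) •
              LieD ι d (d₂ + d₃ - 1) (XD2 br d₂ X₂ X₃) f₁)) := by
  subst hdX₁ hdX₂ hdX₃
  have e12 : degm X₁ + degm X₂ - 1 = degm X₂ + degm X₁ - 1 := by ring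
  have e13 : degm X₁ + degm X₃ - 1 = degm X₃ + degm X₁ - 1 := by ring
  have e23 : degm X₂ + degm X₃ - 1 = degm X₃ + degm X₂ - 1 := by ring
  simp only [D2, XD2, sgn, LieD_zsmul_X, LieD_add_arg, LieD_zsmul_arg]
  rw [e12, e13, e23, hLbr X₂ X₁, hLbr X₃ X₁, hLbr X₃ X₂]
  set a := degm X₁; set b := degm X₂; set c := degm X₃
  generalize LieD ι d a X₁ (LieD ι d b X₂ f₃) = T12
  generalize LieD ι d b X₂ (LieD ι d a X₁ f₃) = T21
  generalize LieD ι d a X₁ (LieD ι d c X₃ f₂) = T13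
  generalize LieD ι d c X₃ (LieD ι d a X₁ f₂) = T31
  generalize LieD ι d b X₂ (LieD ι d c X₃ f₁) = T23
  generalize LieD ι d c X₃ (LieD ι d b X₂ f₁) = T32
  have sq1 : ∀ n : ℤ, ((n.negOnePow : ℤ) : ℝ) = 1 ∨ ((n.negOnePow : ℤ) : ℝ) = -1 := by
    intro n
    rcases Int.even_or_odd n with h | h
    · left; rw [Int.negOnePow_even _ h]; norm_num
    · right; rw [Int.negOnePow_odd _ h]; norm_num
  match_scalars
  all_goals ring_nf
  all_goals simp only [Int.negOnePow_add, Int.negOnePow_sub, Int.negOnePow_neg,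
    Int.negOnePow_one, Units.val_mul, Units.val_neg, Units.val_one,
    Int.cast_mul, Int.cast_neg, Int.cast_one]
  all_goals (
    rcases sq1 a with h1 | h1 <;> rcases sq1 b with h2 | h2 <;>
    rcases sq1 c with h3 | h3 <;> rcases sq1 (b * a) with h4 | h4 <;>
    rcases sq1 (b * c) with h5 | h5 <;> rcases sq1 (a * c) with h6 | h6 <;> rcases sq1 (c * a) with h7 | h7 <;>
    simp only [h1, h2, h3, h4, h5, h6, h7] <;> norm_num)
end

section
/- Let (M, ω) be an n-plectic manifold, f ∈ C^∞_ω(M) an n-plectic function (df ∧ ω = 0), and g a homogeneous Hamiltonian form with associated multivector fields X (i_X ω = -dg) and Y (i_Y ω = -g). Then fY satisfies i_{fY} ω = -fg, and -e(f)[f, Y] + fX satisfies i_{-e(f)[f,Y] + fX} ω = -d(fg); hence the scalar product fg is a Hamiltonian form, and H(M) is a C^∞_ω(M)-module. -/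
/-- for an n-plectic function f (df ∧ ω = 0) and a homogeneous
Hamiltonian form g with associated fields X, Y, the field fY is Hamiltonian for
the scalar product fg and -e(f)[f,Y] + fX is semi-Hamiltonian for fg; hence fg
is Hamiltonian and H(M) is a C^∞_ω(M)-module. -/
theorem nplectic_scalar_multiplication
    -- the algebra of smooth functions
    (R : Type) [CommRing R]
    (Ω MV : Type) [AddCommGroup Ω] [Module ℝ Ω] [Module R Ω]
    [AddCommGroup MV] [Module ℝ MV] [Module R MV]
    (ι : MV →ₗ[ℝ] Ω →ₗ[ℝ] Ω) (d : Ω →ₗ[ℝ] Ω)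
    (n : ℕ) (ω : Ω) (hdω : d ω = 0)
    -- wedge product and exterior derivative of functions
    (W : Ω → Ω → Ω) (dfun : R → Ω)
    -- contraction is C^∞-linear in the multivector field
    (hι_smul : ∀ (h : R) (Z : MV) (α : Ω), ι (h • Z) α = h • ι Z α)
    -- Leibniz rule: d(h • α) = dh ∧ α + h • dα
    (hLeib : ∀ (h : R) (α : Ω), d (h • α) = W (dfun h) α + h • d α)
    -- the Schouten bracket of a function with a multivector field, and the
    -- identity relating i_{[h,Z]}α to L_h i_Z α - i_Z L_h α (functions have
    -- symmetric degree n, so e(h) = (-1)^n; L_h β = dh ∧ β)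
    (brf : R → MV → MV)
    (hbrf : ∀ (h : R) (Z : MV) (α : Ω),
      ((Int.negOnePow (n : ℤ) : ℤ)) • ι (brf h Z) α
        = -(W (dfun h) (ι Z α) - ι Z (W (dfun h) α)))
    -- f is an n-plectic function: df ∧ ω = 0
    (f : R) (hf : W (dfun f) ω = 0)
    -- g is a homogeneous Hamiltonian form with associated fields X, Y
    (g : Ω) (X Y : MV)
    (hX : ι X ω = -(d g)) (hY : ι Y ω = -g) :
    ι (f • Y) ω = -(f • g) ∧
    ι ((-(Int.negOnePow (n : ℤ) : ℤ)) • brf f Y + f • X) ω = -(d (f • g)) ∧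
    IsHamiltonian ι d ω (f • g) := by
  have hfy : ι (f • Y) ω = -(f • g) := by rw [hι_smul, hY, smul_neg]
  have h2 := hbrf f Y ω
  rw [hf, hY] at h2
  simp only [map_zero, LinearMap.zero_apply, sub_zero] at h2
  have hW : W (dfun f) (-g) = -(d (f • g)) + f • d g := by
    have hl := hLeib f (-g)
    rw [smul_neg, map_neg, map_neg, smul_neg] at hl
    have : W (dfun f) (-g) = -(d (f • g)) - -(f • d g) := by
      rw [hl]; abel
    rw [this]; abel
  have hkey : ι ((-(Int.negOnePow (n : ℤ) : ℤ)) • brf f Y + f • X) ω = -(d (f • g)) := by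
    rw [map_add, LinearMap.add_apply, map_zsmul, LinearMap.smul_apply,
      hι_smul, hX, neg_smul, h2, hW, smul_neg]
    abel
  exact ⟨hfy, hkey, ⟨_, hkey⟩, ⟨_, hfy⟩⟩
end

section
/- Let (M, ω) be an n-plectic manifold and suppose g ∈ C^∞(M) is a function such that dg is not a zero divisor of ω (dg ∧ ω ≠ 0). If there exists a Hamiltonian form f of tensor degree n+1 with associated function φ (i.e. φω = -f) such that φ(dg ∧ ω) ≠ 0, then g·f is not a Hamiltonian form; hence H(M) is in general not a C^∞(M)-submodule of Ω(M). -/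
/-- if g ∈ C^∞(M) is such that dg is not a zero divisor of ω
(dg ∧ ω ≠ 0), and f is a Hamiltonian form of tensor degree n+1 with associated
function φ (φω = -f) such that φ(dg ∧ ω) ≠ 0, then g·f is not a Hamiltonian
form; hence H(M) is in general not a C^∞(M)-submodule of Ω(M). -/
theorem hamiltonian_forms_not_Cinfty_module
    (R : Type) [CommRing R]
    (Ω MV : Type) [AddCommGroup Ω] [Module ℝ Ω] [Module R Ω]
    [AddCommGroup MV] [Module ℝ MV]
    (ι : MV →ₗ[ℝ] Ω →ₗ[ℝ] Ω) (d : Ω →ₗ[ℝ] Ω)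
    (n : ℕ) (ω : Ω) (hdω : d ω = 0)
    -- the tensor grading, with the exterior derivative raising degrees and the
    -- bound on contractions against ω
    (homΩ : Ω → ℕ → Prop)
    (hom_neg : ∀ (α : Ω) (r : ℕ), homΩ α r → homΩ (-α) r)
    (hd_deg : ∀ (α : Ω) (r : ℕ), homΩ α r → homΩ (d α) (r + 1))
    (hbound : ∀ (Y : MV) (r : ℕ), n + 1 < r → homΩ (ι Y ω) r → ι Y ω = 0)
    -- wedge product and exterior derivative of functions
    (W : Ω → Ω → Ω) (dfun : R → Ω)
    -- Leibniz rule: d(g • α) = dg ∧ α + g • dα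
    (hLeib : ∀ (g : R) (α : Ω), d (g • α) = W (dfun g) α + g • d α)
    -- wedge with ω is C^∞-linear: dg ∧ (φ • ω) = φ • (dg ∧ ω)
    (hW_smul : ∀ (φ : R) (α : Ω), W α (φ • ω) = φ • W α ω)
    -- the function g, with dg not a zero divisor of ω
    (g : R) (hg : W (dfun g) ω ≠ 0)
    -- a Hamiltonian form f of tensor degree n+1 with associated function φ
    (f : Ω) (hf : IsHamiltonian ι d ω f) (hfdeg : homΩ f (n + 1)) (hfcl : d f = 0)
    (φ : R) (hφ : φ • ω = -f)
    (hφg : φ • W (dfun g) ω ≠ 0)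
    -- g • f is homogeneous of tensor degree n+1 as well
    (hgf_deg : homΩ (g • f) (n + 1)) :
    ¬ IsHamiltonian ι d ω (g • f) := by
  rintro ⟨⟨X, hX⟩, -⟩
  have hdgf : d (g • f) = -(φ • W (dfun g) ω) := by
    rw [hLeib, hfcl, smul_zero, add_zero]
    have hf' : f = (-φ) • ω := by rw [neg_smul, hφ, neg_neg]
    rw [hf', hW_smul, neg_smul]
  have hdeg : homΩ (ι X ω) (n + 2) := by
    rw [hX]
    exact hom_neg _ _ (hd_deg _ _ hgf_deg)
  have h0 : ι X ω = 0 := hbound X (n + 2) (by omega) hdeg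
  rw [h0, hdgf, neg_neg] at hX
  exact hφg hX.symm
end
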